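/- Fix n ≥ 1. For a polynomial function F : M_n(ℂ) × M_n(ℂ) → ℂ, write ∂F/∂X_{ij}(X,Y) for the directional derivative of F at (X,Y) along (E_{ij}, 0) and ∂F/∂Y_{ij}(X,Y) for the directional derivative along (0, E_{ij}), where E_{ij} is the matrix unit. Then for all f, g ∈ A = ℂ⟨x,y⟩ and all X, Y ∈ M_n(ℂ): Σ_{i,j=1}^n ( ∂(tr f)/∂X_{ij}(X,Y) · ∂(tr g)/∂Y_{ji}(X,Y) − ∂(tr f)/∂Y_{ji}(X,Y) · ∂(tr g)/∂X_{ij}(X,Y) ) = Trace( ({f,g}_ω)(X,Y) ). In other words, f mod [A,A] ↦ tr f is a Lie algebra homomorphism from (A/[A,A], {·,·}_ω) to the Poisson algebra of polynomial functions on M_n(ℂ) ⊕ M_n(ℂ) with the symplectic form ω_Rep((U,V),(U′,V′)) = Trace(U·V′ − U′·V). (Proposition 3.3 of the paper, for the one-vertex one-loop quiver.) -/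

import Mathlib

/- STATEMENT 12 (Proposition 3.3 of the paper, for the one-vertex one-loop quiver):
For all f, g ∈ A = ℂ⟨x,y⟩ and X, Y ∈ M_n(ℂ),
Σ_{i,j} ( ∂(tr f)/∂X_{ij}·∂(tr g)/∂Y_{ji} − ∂(tr f)/∂Y_{ji}·∂(tr g)/∂X_{ij} )
  = Trace( ({f,g}_ω)(X,Y) ),
i.e. f mod [A,A] ↦ tr f is a Lie algebra homomorphism to the Poisson algebra of
polynomial functions on M_n(ℂ) ⊕ M_n(ℂ) with symplectic form
ω_Rep((U,V),(U′,V′)) = Trace(U·V′ − U′·V).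

A = ℂ⟨x,y⟩ is modelled as `FreeAlgebra ℂ (Fin 2)`, x the generator `0`, y the
generator `1`; ω is the symplectic form with ω(x,y) = 1 = −ω(y,x), ω(x,x) = ω(y,y) = 0.
The directional derivative ∂F/∂X_{ij}(X,Y) is the derivative at t = 0 of
t ↦ F(X + t·E_{ij}, Y), where E_{ij} is the matrix unit, and similarly for ∂F/∂Y_{ij}. -/

noncomputable section

open scoped BigOperators

/-- The word (monomial) in `ℂ⟨x,y⟩` associated to a list of letters. -/
def wordProd (w : List (Fin 2)) : FreeAlgebra ℂ (Fin 2) :=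
  (w.map fun z => FreeAlgebra.ι ℂ z).prod

/-- The list obtained from `w` by deleting the entry at position `i` and cyclically rotating
so that the entries after position `i` come first. -/
def rotAt (w : List (Fin 2)) (i : ℕ) : List (Fin 2) :=
  w.drop (i + 1) ++ w.take i

/-- The value of the pairing `{·,·}_ω` on a pair of words `u_1⋯u_p`, `v_1⋯v_q`:
`Σ_{i,j} ω(u_i, v_j) • u_{i+1}⋯u_p u_1⋯u_{i−1} v_{j+1}⋯v_q v_1⋯v_{j−1}`. -/
def wordBracket (ω : Fin 2 → Fin 2 → ℂ) (u v : List (Fin 2)) : FreeAlgebra ℂ (Fin 2) :=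
  ∑ i : Fin u.length, ∑ j : Fin v.length,
    ω (u.get i) (v.get j) • wordProd (rotAt u i ++ rotAt v j)

/-- Evaluation `f ↦ f(X,Y)`: the unital algebra homomorphism `ℂ⟨x,y⟩ → M_n(ℂ)`
sending x ↦ X, y ↦ Y, applied to f. -/
def evalM {n : ℕ} (X Y : Matrix (Fin n) (Fin n) ℂ) (f : FreeAlgebra ℂ (Fin 2)) :
    Matrix (Fin n) (Fin n) ℂ :=
  FreeAlgebra.lift ℂ ![X, Y] f


/-! The directional derivative of `tr f` at `(X, Y)` along `(E_X, E_Y)` is the `ε`-part of the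
trace of `f` evaluated at the dual-number matrices `X + ε E_X`, `Y + ε E_Y`; in particular it is
linear in `f`. On a word `u` it equals `Σ_a tr (E_{u_a} · (rotAt u a)(X, Y))`, so the gradient of
`tr u` with respect to the letter `c` is the evaluation of the cyclic derivative
`∂_c u = Σ_{u_a = c} rotAt u a`. Hence the left-hand side is `tr (∂_x f ∂_y g - ∂_y f ∂_x g)(X, Y)`,
and `{u, v}_ω = ∂_x u ∂_y v - ∂_y u ∂_x v` on words; both sides being bilinear, they agree. -/

open FreeAlgebra TrivSqZeroExt

namespace FreeAlgebra

section Dual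

variable {R σ m : Type*} [CommRing R] [Fintype m] [DecidableEq m]

def liftDual (Z E : σ → Matrix m m R) : FreeAlgebra R σ →ₐ[R] DualNumber (Matrix m m R) :=
  lift R fun s => inl (Z s) + inr (E s)

theorem fst_liftDual (Z E : σ → Matrix m m R) (f : FreeAlgebra R σ) :
    (liftDual Z E f).fst = lift R Z f := by
  change (fstHom R _ _).comp (liftDual Z E) f = _
  congr 1
  ext s
  simp [liftDual]

end Dual

section Deriv

variable {𝕜 σ m : Type*} [NontriviallyNormedField 𝕜] [Fintype m] [DecidableEq m]

attribute [local instance] Matrix.linftyOpNormedRing Matrix.linftyOpNormedAlgebra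

theorem hasDerivAt_lift_add_smul (Z E : σ → Matrix m m 𝕜) (f : FreeAlgebra 𝕜 σ) :
    HasDerivAt (fun t : 𝕜 => lift 𝕜 (Z + t • E) f) (liftDual Z E f).snd 0 := by
  induction f using FreeAlgebra.induction with
  | grade0 r =>
    simp only [AlgHom.commutes, liftDual, algebraMap_eq_inl', snd_inl]
    exact hasDerivAt_const _ _
  | grade1 s =>
    have := ((hasDerivAt_id (0 : 𝕜)).smul_const (E s)).const_add (Z s)
    simp only [lift_ι_apply, liftDual, snd_add, snd_inl, snd_inr, zero_add, Pi.add_apply,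
      Pi.smul_apply, id, one_smul] at this ⊢
    exact this
  | mul f g hf hg =>
    have := hf.fun_mul hg
    simp only [zero_smul, add_zero, map_mul, snd_mul, fst_liftDual, smul_eq_mul,
      op_smul_eq_mul] at this ⊢
    rw [add_comm]
    exact this
  | add f g hf hg =>
    have := hf.fun_add hg
    simp only [map_add, snd_add] at this ⊢
    exact this

theorem hasDerivAt_trace_lift_add_smul [CompleteSpace 𝕜] (Z E : σ → Matrix m m 𝕜) (f : FreeAlgebra 𝕜 σ) :
    HasDerivAt (fun t : 𝕜 => (lift 𝕜 (Z + t • E) f).trace) (liftDual Z E f).snd.trace 0 :=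
  (Matrix.traceLinearMap m 𝕜 𝕜).toContinuousLinearMap.hasFDerivAt.comp_hasDerivAt 0
    (hasDerivAt_lift_add_smul Z E f)

end Deriv

end FreeAlgebra

section Words

variable {m : Type*} [Fintype m] [DecidableEq m]

theorem wordProd_cons (a : Fin 2) (u : List (Fin 2)) :
    wordProd (a :: u) = ι ℂ a * wordProd u := by
  simp [wordProd]

theorem wordProd_append (u v : List (Fin 2)) :
    wordProd (u ++ v) = wordProd u * wordProd v := by
  simp [wordProd]

theorem lift_wordProd {A : Type*} [Semiring A] [Algebra ℂ A] (Z : Fin 2 → A) (u : List (Fin 2)) :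
    lift ℂ Z (wordProd u) = (u.map Z).prod := by
  simp [wordProd, map_list_prod, Function.comp_def]

theorem basisFreeMonoid_eq_wordProd (w : FreeMonoid (Fin 2)) :
    basisFreeMonoid ℂ (Fin 2) w = wordProd w.toList := by
  simp [basisFreeMonoid, equivMonoidAlgebraFreeMonoid, wordProd, FreeMonoid.lift_apply]

theorem ext_wordProd₂ {M : Type*} [AddCommMonoid M] [Module ℂ M]
    {B B' : FreeAlgebra ℂ (Fin 2) →ₗ[ℂ] FreeAlgebra ℂ (Fin 2) →ₗ[ℂ] M}
    (h : ∀ u v, B (wordProd u) (wordProd v) = B' (wordProd u) (wordProd v)) : B = B' :=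
  LinearMap.ext_basis (basisFreeMonoid ℂ _) (basisFreeMonoid ℂ _) fun u v => by
    simpa only [basisFreeMonoid_eq_wordProd] using h u.toList v.toList

theorem snd_liftDual_wordProd (Z E : Fin 2 → Matrix m m ℂ) (u : List (Fin 2)) :
    (liftDual Z E (wordProd u)).snd =
      ∑ a : Fin u.length,
        ((u.take a).map Z).prod * E (u.get a) * ((u.drop (a + 1)).map Z).prod := by
  induction u with
  | nil => simp [wordProd]
  | cons a u ih =>
    rw [wordProd_cons, map_mul, snd_mul, fst_liftDual, fst_liftDual, lift_wordProd, ih]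
    refine Eq.trans ?_ (Fin.sum_univ_succ (n := u.length) _).symm
    simpa [liftDual, Finset.mul_sum, mul_assoc] using add_comm _ _

theorem trace_snd_liftDual_wordProd (Z E : Fin 2 → Matrix m m ℂ) (u : List (Fin 2)) :
    (liftDual Z E (wordProd u)).snd.trace =
      ∑ a : Fin u.length, (E (u.get a) * lift ℂ Z (wordProd (rotAt u a))).trace := by
  rw [snd_liftDual_wordProd, Matrix.trace_sum]
  refine Finset.sum_congr rfl fun a _ => ?_
  rw [rotAt, lift_wordProd, List.map_append, List.prod_append, Matrix.trace_mul_cycle,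
    Matrix.trace_mul_comm]

def cycDeriv (c : Fin 2) (u : List (Fin 2)) : FreeAlgebra ℂ (Fin 2) :=
  ∑ a with u.get a = c, wordProd (rotAt u a)

theorem wordBracket_eq_sum_cycDeriv (ω : Fin 2 → Fin 2 → ℂ) (u v : List (Fin 2)) :
    wordBracket ω u v = ∑ c, ∑ d, ω c d • (cycDeriv c u * cycDeriv d v) := by
  simp only [cycDeriv, Finset.sum_mul_sum, Finset.smul_sum, ← wordProd_append]
  calc wordBracket ω u v
      = ∑ c, ∑ a with u.get a = c, ∑ d, ∑ b with v.get b = d,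
          ω (u.get a) (v.get b) • wordProd (rotAt u a ++ rotAt v b) := by
        simp only [Finset.sum_fiberwise, wordBracket]
    _ = _ := by
      refine Finset.sum_congr rfl fun c _ => ?_
      rw [Finset.sum_comm]
      refine Finset.sum_congr rfl fun d _ => Finset.sum_congr rfl fun a ha => ?_
      refine Finset.sum_congr rfl fun b hb => ?_
      rw [(Finset.mem_filter.1 ha).2, (Finset.mem_filter.1 hb).2]

theorem wordBracket_eq_cycDeriv_mul_sub (ω : Fin 2 → Fin 2 → ℂ)
    (hxy : ω 0 1 = 1) (hyx : ω 1 0 = -1) (hxx : ω 0 0 = 0) (hyy : ω 1 1 = 0)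
    (u v : List (Fin 2)) :
    wordBracket ω u v = cycDeriv 0 u * cycDeriv 1 v - cycDeriv 1 u * cycDeriv 0 v := by
  simp [wordBracket_eq_sum_cycDeriv, Fin.sum_univ_two, hxy, hyx, hxx, hyy, sub_eq_add_neg]

end Words

section Gradient

variable {R σ m : Type*} [CommRing R] [DecidableEq σ] [Fintype m] [DecidableEq m]

/-- The `(j, i)` entry is the partial derivative of `tr f` in the `(i, j)` entry of `Z c`, so that
the directional derivative along `E` in the `c`-th variable is `tr (E * traceGrad Z c f)`. -/
def traceGrad (Z : σ → Matrix m m R) (c : σ) : FreeAlgebra R σ →ₗ[R] Matrix m m R :=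
  LinearMap.pi fun j => LinearMap.pi fun i =>
    Matrix.traceLinearMap m R R ∘ₗ LinearMap.snd R _ _ ∘ₗ
      (liftDual Z (Pi.single c (Matrix.single i j 1))).toLinearMap

theorem traceGrad_apply (Z : σ → Matrix m m R) (c : σ) (f : FreeAlgebra R σ) (i j : m) :
    traceGrad Z c f j i = (liftDual Z (Pi.single c (Matrix.single i j 1)) f).snd.trace :=
  rfl

end Gradient

section Bracket

variable {m : Type*} [Fintype m] [DecidableEq m]

theorem traceGrad_wordProd (Z : Fin 2 → Matrix m m ℂ) (c : Fin 2) (u : List (Fin 2)) :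
    traceGrad Z c (wordProd u) = lift ℂ Z (cycDeriv c u) := by
  ext j i
  rw [traceGrad_apply, trace_snd_liftDual_wordProd, cycDeriv, map_sum, Matrix.sum_apply,
    Finset.sum_filter]
  refine Finset.sum_congr rfl fun a _ => ?_
  split_ifs with h
  · simp [← h, Matrix.trace_single_mul]
  · rw [Pi.single_eq_of_ne h, zero_mul, Matrix.trace_zero]

theorem trace_lift_bracket (ω : Fin 2 → Fin 2 → ℂ)
    (hxy : ω 0 1 = 1) (hyx : ω 1 0 = -1) (hxx : ω 0 0 = 0) (hyy : ω 1 1 = 0)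
    (Br : FreeAlgebra ℂ (Fin 2) →ₗ[ℂ] FreeAlgebra ℂ (Fin 2) →ₗ[ℂ] FreeAlgebra ℂ (Fin 2))
    (hBr : ∀ u v : List (Fin 2), Br (wordProd u) (wordProd v) = wordBracket ω u v)
    (Z : Fin 2 → Matrix m m ℂ) (f g : FreeAlgebra ℂ (Fin 2)) :
    (lift ℂ Z (Br f g)).trace =
      (traceGrad Z 0 f * traceGrad Z 1 g - traceGrad Z 1 f * traceGrad Z 0 g).trace := by
  let tr := Matrix.traceLinearMap m ℂ ℂ
  let μ := LinearMap.mul ℂ (Matrix m m ℂ)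
  have h : Br.compr₂ (tr ∘ₗ (lift ℂ Z).toLinearMap) =
      (μ.compl₁₂ (traceGrad Z 0) (traceGrad Z 1) -
        μ.compl₁₂ (traceGrad Z 1) (traceGrad Z 0)).compr₂ tr :=
    ext_wordProd₂ fun u v => by
      simp [tr, μ, hBr, wordBracket_eq_cycDeriv_mul_sub ω hxy hyx hxx hyy, traceGrad_wordProd]
  exact LinearMap.congr_fun₂ h f g

end Bracket

theorem deriv_trace_evalM_left {n : ℕ} (X Y E : Matrix (Fin n) (Fin n) ℂ)
    (f : FreeAlgebra ℂ (Fin 2)) :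
    deriv (fun t : ℂ => (evalM (X + t • E) Y f).trace) 0 =
      (liftDual ![X, Y] (Pi.single 0 E) f).snd.trace := by
  have h (t : ℂ) : ![X + t • E, Y] = ![X, Y] + t • (Pi.single 0 E : Fin 2 → _) := by
    ext c : 1; fin_cases c <;> simp
  simp only [evalM, h]
  exact (hasDerivAt_trace_lift_add_smul _ _ f).deriv

theorem deriv_trace_evalM_right {n : ℕ} (X Y E : Matrix (Fin n) (Fin n) ℂ)
    (f : FreeAlgebra ℂ (Fin 2)) :
    deriv (fun t : ℂ => (evalM X (Y + t • E) f).trace) 0 =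
      (liftDual ![X, Y] (Pi.single 1 E) f).snd.trace := by
  have h (t : ℂ) : ![X, Y + t • E] = ![X, Y] + t • (Pi.single 1 E : Fin 2 → _) := by
    ext c : 1; fin_cases c <;> simp
  simp only [evalM, h]
  exact (hasDerivAt_trace_lift_add_smul _ _ f).deriv

theorem ginzburg_prop_3_3_one_loop_quiver_general (n : ℕ)
    (ω : Fin 2 → Fin 2 → ℂ)
    -- ω(x,y) = 1 = −ω(y,x), ω(x,x) = ω(y,y) = 0:
    (hxy : ω 0 1 = 1) (hyx : ω 1 0 = -1) (hxx : ω 0 0 = 0) (hyy : ω 1 1 = 0)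
    -- `Br` is the ℂ-bilinear pairing `{·,·}_ω`, determined by its values on words:
    (Br : FreeAlgebra ℂ (Fin 2) →ₗ[ℂ] FreeAlgebra ℂ (Fin 2) →ₗ[ℂ] FreeAlgebra ℂ (Fin 2))
    (hBr : ∀ u v : List (Fin 2), Br (wordProd u) (wordProd v) = wordBracket ω u v) :
    ∀ f g : FreeAlgebra ℂ (Fin 2), ∀ X Y : Matrix (Fin n) (Fin n) ℂ,
      (∑ i : Fin n, ∑ j : Fin n,
        (deriv (fun t : ℂ =>
            Matrix.trace (evalM (X + t • Matrix.single i j 1) Y f)) 0 *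
          deriv (fun t : ℂ =>
            Matrix.trace (evalM X (Y + t • Matrix.single j i 1) g)) 0 -
         deriv (fun t : ℂ =>
            Matrix.trace (evalM X (Y + t • Matrix.single j i 1) f)) 0 *
          deriv (fun t : ℂ =>
            Matrix.trace (evalM (X + t • Matrix.single i j 1) Y g)) 0))
        = Matrix.trace (evalM X Y (Br f g)) := by
  intro f g X Y
  simp only [deriv_trace_evalM_left, deriv_trace_evalM_right, ← traceGrad_apply]
  rw [evalM, trace_lift_bracket ω hxy hyx hxx hyy Br hBr, Matrix.trace_sub]
  simp only [Matrix.trace, Matrix.diag, Matrix.mul_apply, Finset.sum_sub_distrib]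
  rw [Finset.sum_comm]

theorem ginzburg_prop_3_3_one_loop_quiver (n : ℕ) (hn : 1 ≤ n)
    (ω : Fin 2 → Fin 2 → ℂ)
    -- ω(x,y) = 1 = −ω(y,x), ω(x,x) = ω(y,y) = 0:
    (hxy : ω 0 1 = 1) (hyx : ω 1 0 = -1) (hxx : ω 0 0 = 0) (hyy : ω 1 1 = 0)
    -- `Br` is the ℂ-bilinear pairing `{·,·}_ω`, determined by its values on words:
    (Br : FreeAlgebra ℂ (Fin 2) →ₗ[ℂ] FreeAlgebra ℂ (Fin 2) →ₗ[ℂ] FreeAlgebra ℂ (Fin 2))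
    (hBr : ∀ u v : List (Fin 2), Br (wordProd u) (wordProd v) = wordBracket ω u v) :
    ∀ f g : FreeAlgebra ℂ (Fin 2), ∀ X Y : Matrix (Fin n) (Fin n) ℂ,
      (∑ i : Fin n, ∑ j : Fin n,
        (deriv (fun t : ℂ =>
            Matrix.trace (evalM (X + t • Matrix.single i j 1) Y f)) 0 *
          deriv (fun t : ℂ =>
            Matrix.trace (evalM X (Y + t • Matrix.single j i 1) g)) 0 -
         deriv (fun t : ℂ =>
            Matrix.trace (evalM X (Y + t • Matrix.single j i 1) f)) 0 *
          deriv (fun t : ℂ =>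
            Matrix.trace (evalM (X + t • Matrix.single i j 1) Y g)) 0))
        = Matrix.trace (evalM X Y (Br f g)) :=
  ginzburg_prop_3_3_one_loop_quiver_general n ω hxy hyx hxx hyy Br hBr
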